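/- Let φ : M → S^n be a smooth map, expressed in a local chart (U, x^i) on M and in the coordinates (ỹ, s) on S^n∖{N,S} with φ(U) contained in the coordinate domain, and set f := φ^n − π/2. Then on any open set D whose closure is compact and contained in U, there exists a constant C > 0 such that, for 0 ≤ j ≤ k−3: (i) |Δf| ≤ C(|f| + |u₀^n|); (ii) |Δ(df)| ≤ C(|f| + |df| + |∇df| + |v₀^n|); (iii) |A^n_{j+1}| ≤ C(|f| + |df|). -/

import Mathlib

noncomputable section

open scoped BigOperators

namespace Polyharm

/-- Partial derivative of a scalar function on `ℝ^d` in the `i`-th coordinate direction. -/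
def pd {d : ℕ} (i : Fin d) (f : (Fin d → ℝ) → ℝ) (x : Fin d → ℝ) : ℝ :=
  fderiv ℝ f x (Pi.single i 1)

/-- Euclidean norm of a finite family of real numbers. -/
def vnorm {ι : Type} [Fintype ι] (f : ι → ℝ) : ℝ :=
  Real.sqrt (∑ i, f i ^ 2)

/-- Local-coordinate data for maps between Riemannian manifolds: the inverse metric
`g^{ij}` and the Christoffel symbols `Γ^k_{ij}` of a chart of the domain `(M,g)`, and
the Christoffel symbols `Γ^α_{βγ}` of a chart of the target `(N,h)`. -/
structure ChartData (m n : ℕ) where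
  ginv : (Fin m → ℝ) → Fin m → Fin m → ℝ
  ΓM : (Fin m → ℝ) → Fin m → Fin m → Fin m → ℝ
  ΓN : (Fin n → ℝ) → Fin n → Fin n → Fin n → ℝ

variable {m n : ℕ}

/-- Smoothness of the domain data. -/
def ChartData.SmoothDomain (P : ChartData m n) : Prop :=
  (∀ i j, ContDiff ℝ (⊤ : ℕ∞) fun x => P.ginv x i j) ∧
  (∀ k i j, ContDiff ℝ (⊤ : ℕ∞) fun x => P.ΓM x k i j)

/-- Smoothness of the target Christoffel symbols. -/
def ChartData.SmoothTarget (P : ChartData m n) : Prop :=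
  ∀ α β γ, ContDiff ℝ (⊤ : ℕ∞) fun y => P.ΓN y α β γ

/-- The chart data comes from Riemannian metrics: `g^{ij}` is symmetric and positive
definite, and the Christoffel symbols are symmetric in their lower indices. -/
def ChartData.Riemannian (P : ChartData m n) : Prop :=
  (∀ x i j, P.ginv x i j = P.ginv x j i) ∧
  (∀ x (v : Fin m → ℝ), v ≠ 0 → 0 < ∑ i, ∑ j, P.ginv x i j * v i * v j) ∧
  (∀ x k i j, P.ΓM x k i j = P.ΓM x k j i) ∧
  (∀ y α β γ, P.ΓN y α β γ = P.ΓN y α γ β)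

/-- The Laplace–Beltrami operator on scalar functions:
`-Δ f = g^{ij} ∂²f/∂x^i∂x^j - g^{ij} Γ^k_{ij} ∂f/∂x^k`. -/
def lap (P : ChartData m n) (f : (Fin m → ℝ) → ℝ) (x : Fin m → ℝ) : ℝ :=
  -((∑ i, ∑ j, P.ginv x i j * pd i (fun z => pd j f z) x)
    - ∑ i, ∑ j, ∑ k, P.ginv x i j * P.ΓM x k i j * pd k f x)

/-- `φ_i^β = ∂φ^β/∂x^i`. -/
def dphi (φ : (Fin m → ℝ) → Fin n → ℝ) (x : Fin m → ℝ) (i : Fin m) (β : Fin n) : ℝ :=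
  pd i (fun z => φ z β) x

/-- `⟨dφ^β, dψ^γ⟩ = g^{ij} φ_i^β ψ_j^γ`. -/
def dpair (P : ChartData m n) (φ ψ : (Fin m → ℝ) → Fin n → ℝ) (x : Fin m → ℝ)
    (β γ : Fin n) : ℝ :=
  ∑ i, ∑ j, P.ginv x i j * dphi φ x i β * dphi ψ x j γ

/-- Components `R^α_{δβγ}` of the curvature tensor of the target, with the sign
convention `R(∂/∂y^β, ∂/∂y^γ)∂/∂y^δ = R^α_{δβγ} ∂/∂y^α` of the paper. -/
def Rc (P : ChartData m n) (y : Fin n → ℝ) (α δ β γ : Fin n) : ℝ :=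
  pd β (fun z => P.ΓN z α γ δ) y - pd γ (fun z => P.ΓN z α β δ) y
    + ∑ μ, (P.ΓN y α β μ * P.ΓN y μ γ δ - P.ΓN y α γ μ * P.ΓN y μ β δ)

/-- `2S^α_{βωϑ} = ∂Γ^α_{βϑ}/∂y^ω + Γ^γ_{βϑ}Γ^α_{ωγ} + ∂Γ^α_{ωϑ}/∂y^β + Γ^γ_{ωϑ}Γ^α_{βγ}`. -/
def Scoef (P : ChartData m n) (y : Fin n → ℝ) (α β ω ϑ : Fin n) : ℝ :=
  (pd ω (fun z => P.ΓN z α β ϑ) y + (∑ γ, P.ΓN y γ β ϑ * P.ΓN y α ω γ)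
    + pd β (fun z => P.ΓN z α ω ϑ) y + ∑ γ, P.ΓN y γ ω ϑ * P.ΓN y α β γ) / 2

/-- The operator
`A^α(η,ξ) = ξ_i^ϑ(-2 g^{ij} φ_j^β Γ^α_{βϑ}) + η^ϑ((Δφ^β)Γ^α_{βϑ} - g^{ij} φ_j^β φ_i^ω S^α_{βωϑ})`. -/
def Aop (P : ChartData m n) (φ : (Fin m → ℝ) → Fin n → ℝ) (η : Fin n → ℝ)
    (ξ : Fin m → Fin n → ℝ) (x : Fin m → ℝ) (α : Fin n) : ℝ :=
  (∑ ϑ, ∑ i, ξ i ϑ * (-2 * ∑ j, ∑ β, P.ginv x i j * dphi φ x j β * P.ΓN (φ x) α β ϑ))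
    + ∑ ϑ, η ϑ * ((∑ β, lap P (fun z => φ z β) x * P.ΓN (φ x) α β ϑ)
        - ∑ i, ∑ j, ∑ β, ∑ ω,
            P.ginv x i j * dphi φ x j β * dphi φ x i ω * Scoef P (φ x) α β ω ϑ)

/-- The operator `A` applied to (the components of) a section `σ` of `φ⁻¹TN`:
`A(σ, ∂σ)`. -/
def Asec (P : ChartData m n) (φ σ : (Fin m → ℝ) → Fin n → ℝ) (x : Fin m → ℝ)
    (α : Fin n) : ℝ :=
  Aop P φ (σ x) (fun i ϑ => pd i (fun z => σ z ϑ) x) x α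

/-- Components of the tension field `τ^α(φ) = -Δφ^α + g^{ij} Γ^α_{ϑβ} φ_i^ϑ φ_j^β`. -/
def tension (P : ChartData m n) (φ : (Fin m → ℝ) → Fin n → ℝ) (x : Fin m → ℝ)
    (α : Fin n) : ℝ :=
  -(lap P (fun z => φ z α) x)
    + ∑ i, ∑ j, ∑ ϑ, ∑ β,
        P.ginv x i j * P.ΓN (φ x) α ϑ β * dphi φ x i ϑ * dphi φ x j β

/-- The components `u_j` of `Δ̄^j τ(φ)`: `u_0 = τ(φ)` and
`u_{j+1} = Δ u_j + A(u_j, ∂u_j)` (local expression of the rough Laplacian). -/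
def uvar (P : ChartData m n) (φ : (Fin m → ℝ) → Fin n → ℝ) :
    ℕ → (Fin m → ℝ) → Fin n → ℝ
  | 0 => tension P φ
  | j+1 => fun x α => lap P (fun z => uvar P φ j z α) x + Asec P φ (uvar P φ j) x α

/-- `v_j = du_j`, i.e. `v_{j i}^α = ∂u_j^α/∂x^i`. -/
def vvar (P : ChartData m n) (φ : (Fin m → ℝ) → Fin n → ℝ) (j : ℕ) (x : Fin m → ℝ)
    (i : Fin m) (α : Fin n) : ℝ :=
  pd i (fun z => uvar P φ j z α) x

/-- Components of the pull-back covariant derivative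
`(∇̄_{∂_i} σ)^γ = ∂σ^γ/∂x^i + Γ^γ_{βδ}(φ) φ_i^β σ^δ`. -/
def covD (P : ChartData m n) (φ σ : (Fin m → ℝ) → Fin n → ℝ) (i : Fin m)
    (x : Fin m → ℝ) (γ : Fin n) : ℝ :=
  pd i (fun z => σ z γ) x + ∑ β, ∑ δ, P.ΓN (φ x) γ β δ * dphi φ x i β * σ x δ

/-- `(Tr_g R^N(X, dφ(·))dφ(·))^α`. -/
def trRphi (P : ChartData m n) (φ X : (Fin m → ℝ) → Fin n → ℝ) (x : Fin m → ℝ)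
    (α : Fin n) : ℝ :=
  ∑ i, ∑ j, ∑ β, ∑ γ, ∑ δ,
    P.ginv x i j * Rc P (φ x) α δ β γ * X x β * dphi φ x i γ * dphi φ x j δ

/-- `(Tr_g R^N(dφ(·), X)dφ(·))^α`. -/
def trRphi2 (P : ChartData m n) (φ X : (Fin m → ℝ) → Fin n → ℝ) (x : Fin m → ℝ)
    (α : Fin n) : ℝ :=
  ∑ i, ∑ j, ∑ β, ∑ γ, ∑ δ,
    P.ginv x i j * Rc P (φ x) α δ β γ * dphi φ x i β * X x γ * dphi φ x j δ

/-- `(Tr_g R^N(∇̄_{(·)}W, Z)dφ(·))^α`. -/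
def trRD (P : ChartData m n) (φ W Z : (Fin m → ℝ) → Fin n → ℝ) (x : Fin m → ℝ)
    (α : Fin n) : ℝ :=
  ∑ i, ∑ j, ∑ β, ∑ γ, ∑ δ,
    P.ginv x i j * Rc P (φ x) α δ β γ * covD P φ W i x β * Z x γ * dphi φ x j δ

/-- `(Tr_g R^N(W, ∇̄_{(·)}Z)dφ(·))^α`. -/
def trRD2 (P : ChartData m n) (φ W Z : (Fin m → ℝ) → Fin n → ℝ) (x : Fin m → ℝ)
    (α : Fin n) : ℝ :=
  ∑ i, ∑ j, ∑ β, ∑ γ, ∑ δ,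
    P.ginv x i j * Rc P (φ x) α δ β γ * W x β * covD P φ Z i x γ * dphi φ x j δ

/-- Local components of Maeta's `k`-tension field `τ_k(φ)`, for `k = 2s`:
`τ_{2s}(φ) = Δ̄^{2s-1}τ(φ) - R^N(Δ̄^{2s-2}τ(φ), dφ(e_j))dφ(e_j)
  - Σ_{ℓ=1}^{s-1}( R^N(∇̄_{e_j}Δ̄^{s+ℓ-2}τ(φ), Δ̄^{s-ℓ-1}τ(φ))dφ(e_j)
                 - R^N(Δ̄^{s+ℓ-2}τ(φ), ∇̄_{e_j}Δ̄^{s-ℓ-1}τ(φ))dφ(e_j) )`,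
and for `k = 2s+1`:
`τ_{2s+1}(φ) = Δ̄^{2s}τ(φ) - R^N(Δ̄^{2s-1}τ(φ), dφ(e_j))dφ(e_j)
  - Σ_{ℓ=1}^{s-1}( R^N(∇̄_{e_j}Δ̄^{s+ℓ-1}τ(φ), Δ̄^{s-ℓ-1}τ(φ))dφ(e_j)
                 - R^N(Δ̄^{s+ℓ-1}τ(φ), ∇̄_{e_j}Δ̄^{s-ℓ-1}τ(φ))dφ(e_j) )
  - R^N(∇̄_{e_j}Δ̄^{s-1}τ(φ), Δ̄^{s-1}τ(φ))dφ(e_j)`. -/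
def tauK (P : ChartData m n) (φ : (Fin m → ℝ) → Fin n → ℝ) (k : ℕ) (x : Fin m → ℝ)
    (α : Fin n) : ℝ :=
  if Even k then
    uvar P φ (k-1) x α - trRphi P φ (uvar P φ (k-2)) x α
      - ∑ ℓ ∈ Finset.Icc 1 (k/2 - 1),
          (trRD P φ (uvar P φ (k/2 + ℓ - 2)) (uvar P φ (k/2 - ℓ - 1)) x α
            - trRD2 P φ (uvar P φ (k/2 + ℓ - 2)) (uvar P φ (k/2 - ℓ - 1)) x α)
  else
    uvar P φ (k-1) x α - trRphi P φ (uvar P φ (k-2)) x α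
      - (∑ ℓ ∈ Finset.Icc 1 (k/2 - 1),
          (trRD P φ (uvar P φ (k/2 + ℓ - 1)) (uvar P φ (k/2 - ℓ - 1)) x α
            - trRD2 P φ (uvar P φ (k/2 + ℓ - 1)) (uvar P φ (k/2 - ℓ - 1)) x α))
      - trRD P φ (uvar P φ (k/2 - 1)) (uvar P φ (k/2 - 1)) x α

/-- Components `(∇dφ)(∂_i,∂_j)^α` of the second fundamental form of `φ`. -/
def sff (P : ChartData m n) (φ : (Fin m → ℝ) → Fin n → ℝ) (x : Fin m → ℝ)
    (i j : Fin m) (α : Fin n) : ℝ :=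
  pd i (fun z => dphi φ z j α) x - (∑ k, P.ΓM x k i j * dphi φ x k α)
    + ∑ β, ∑ γ, P.ΓN (φ x) α β γ * dphi φ x i β * dphi φ x j γ

/-- Christoffel symbols `Γ^α_{βγ}` of the round sphere `S^{d+1}` in the equator
coordinates `S^{d+1}∖{N,S} = (S^d × (0,π), sin²s·g̃ + ds²)`: here `gt = g̃` and
`Γt = Γ̃` are the metric and the Christoffel symbols of the equator `S^d`, the last
coordinate is `s`, and
`Γ^a_{bc} = Γ̃^a_{bc}`, `Γ^n_{bc} = -½ sin(2s) g̃_{bc}`,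
`Γ^a_{nn} = Γ^n_{nn} = Γ^n_{bn} = 0`, `Γ^a_{bn} = (cos s/sin s)δ^a_b`. -/
def sphereΓ (d : ℕ) (gt : (Fin d → ℝ) → Fin d → Fin d → ℝ)
    (Γt : (Fin d → ℝ) → Fin d → Fin d → Fin d → ℝ) :
    (Fin (d+1) → ℝ) → Fin (d+1) → Fin (d+1) → Fin (d+1) → ℝ :=
  fun y α β γ =>
    let s : ℝ := y (Fin.last d)
    let yt : Fin d → ℝ := fun a => y (Fin.castSucc a)
    if hα : (α : ℕ) < d then
      if hβ : (β : ℕ) < d then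
        if hγ : (γ : ℕ) < d then Γt yt ⟨α.1, hα⟩ ⟨β.1, hβ⟩ ⟨γ.1, hγ⟩
        else (Real.cos s / Real.sin s) * (if (α : ℕ) = (β : ℕ) then 1 else 0)
      else
        if (γ : ℕ) < d then
          (Real.cos s / Real.sin s) * (if (α : ℕ) = (γ : ℕ) then 1 else 0)
        else 0
    else
      if hβ : (β : ℕ) < d then
        if hγ : (γ : ℕ) < d then -(1/2) * Real.sin (2*s) * gt yt ⟨β.1, hβ⟩ ⟨γ.1, hγ⟩
        else 0
      else 0

/-- Components of the round metric `sin²s·g̃ + ds²` of `S^{d+1}` in equator coordinates. -/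
def sphereMet (d : ℕ) (gt : (Fin d → ℝ) → Fin d → Fin d → ℝ) :
    (Fin (d+1) → ℝ) → Fin (d+1) → Fin (d+1) → ℝ :=
  fun y β γ =>
    let s : ℝ := y (Fin.last d)
    let yt : Fin d → ℝ := fun a => y (Fin.castSucc a)
    if hβ : (β : ℕ) < d then
      if hγ : (γ : ℕ) < d then Real.sin s ^ 2 * gt yt ⟨β.1, hβ⟩ ⟨γ.1, hγ⟩ else 0
    else if (γ : ℕ) < d then 0 else 1

/-- `gt` is a Riemannian metric on the chart of `S^d` and `Γt` is the family of
Christoffel symbols of its Levi-Civita connection. -/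
def LeviCivita (d : ℕ) (gt : (Fin d → ℝ) → Fin d → Fin d → ℝ)
    (Γt : (Fin d → ℝ) → Fin d → Fin d → Fin d → ℝ) : Prop :=
  (∀ y a b, gt y a b = gt y b a) ∧
  (∀ y (v : Fin d → ℝ), v ≠ 0 → 0 < ∑ a, ∑ b, gt y a b * v a * v b) ∧
  (∀ y a b c, Γt y a b c = Γt y a c b) ∧
  (∀ y a b c, pd c (fun z => gt z a b) y
    = (∑ e, gt y e b * Γt y e c a) + ∑ e, gt y a e * Γt y e c b)

/-!
In the equator chart the last row of the Christoffel symbols of `S^n` is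
`Γ^n_{bc} = -½ sin(2s) g̃_{bc}` (the other entries `Γ^n_{bn}`, `Γ^n_{nn}` vanish), and
`|sin 2s| ≤ 2|s - π/2|`. Hence along `φ` the symbols `Γ^n` and their tangential derivatives
`∂_a Γ^n` are `O(|f|)`, while `∂_i (Γ^n ∘ φ)` is `O(|f| + |df|)`. In local coordinates each
quantity of the statement is a finite sum of products of smooth coefficients with one small
factor: `Γ^n ∘ φ`, `∂_i (Γ^n ∘ φ)`, `u₀^n`, `v₀^n`, `dφ^n` or `∇dφ^n`. For (ii) one commutes `Δ`
with `∂_i` and writes the second derivatives of `φ^n` through `∇dφ^n`; for (iii), `S^n_{βωϑ}` is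
`O(|f|)` unless `β` or `ω` is the normal direction, and then the factor `dφ^n` occurs. Smooth
coefficients are bounded on the compact set `closure D`, so all estimates are statements
`=O[𝓟 (closure D)]`.
-/

open Asymptotics Filter

section Smooth

variable {E F : Type*} [NormedAddCommGroup E] [NormedSpace ℝ E] [NormedAddCommGroup F]
  [NormedSpace ℝ F] {f : E → F}

@[fun_prop]
lemma differentiableAt_of_contDiff_top (hf : ContDiff ℝ (⊤ : ℕ∞) f) (x : E) :
    DifferentiableAt ℝ f x :=
  hf.differentiable (by simp) x

@[fun_prop]
lemma continuous_of_contDiff_top (hf : ContDiff ℝ (⊤ : ℕ∞) f) : Continuous f :=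
  hf.continuous

end Smooth

section PartialDerivatives

variable {p : ℕ} {f g : (Fin p → ℝ) → ℝ} {x : Fin p → ℝ}

@[fun_prop]
lemma contDiff_pd (i : Fin p) (hf : ContDiff ℝ (⊤ : ℕ∞) f) : ContDiff ℝ (⊤ : ℕ∞) (pd i f) :=
  (hf.fderiv_right (by exact_mod_cast le_top)).clm_apply contDiff_const

lemma pd_sub (hf : DifferentiableAt ℝ f x) (hg : DifferentiableAt ℝ g x) (i : Fin p) :
    pd i (fun z => f z - g z) x = pd i f x - pd i g x := by
  simp [pd, fderiv_fun_sub hf hg]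

lemma pd_neg (i : Fin p) : pd i (fun z => -f z) x = -pd i f x := by
  simp [pd, fderiv_fun_neg]

lemma pd_sub_const (i : Fin p) (c : ℝ) : pd i (fun z => f z - c) x = pd i f x := by
  simp [pd, fderiv_sub_const]

lemma pd_mul (hf : DifferentiableAt ℝ f x) (hg : DifferentiableAt ℝ g x) (i : Fin p) :
    pd i (fun z => f z * g z) x = pd i f x * g x + f x * pd i g x := by
  simp [pd, fderiv_fun_mul hf hg]
  ring

lemma pd_const_mul (hf : DifferentiableAt ℝ f x) (c : ℝ) (i : Fin p) :
    pd i (fun z => c * f z) x = c * pd i f x := by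
  simp [pd, fderiv_const_mul hf]

lemma pd_sum {ι : Type*} (s : Finset ι) {F : ι → (Fin p → ℝ) → ℝ}
    (hF : ∀ t, DifferentiableAt ℝ (F t) x) (i : Fin p) :
    pd i (fun z => ∑ t ∈ s, F t z) x = ∑ t ∈ s, pd i (F t) x := by
  simp [pd, fderiv_fun_sum fun t _ => hF t]

lemma pd_sin (hf : DifferentiableAt ℝ f x) (i : Fin p) :
    pd i (fun z => Real.sin (f z)) x = Real.cos (f x) * pd i f x := by
  simp [pd, hf.hasFDerivAt.sin.fderiv]

lemma pd_apply (i j : Fin p) : pd i (fun y => y j) x = (Pi.single i (1 : ℝ) : Fin p → ℝ) j := by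
  simp [pd, (hasFDerivAt_apply j x).fderiv]

lemma pd_comm (hf : ContDiff ℝ (⊤ : ℕ∞) f) (i j : Fin p) : pd i (pd j f) x = pd j (pd i f) x := by
  have hpd₂ : ∀ a b, pd a (pd b f) x = fderiv ℝ (fderiv ℝ f) x (Pi.single a 1) (Pi.single b 1) := by
    intro a b
    have hd : DifferentiableAt ℝ (fderiv ℝ f) x :=
      (hf.fderiv_right (m := (⊤ : ℕ∞)) (by simp)).differentiable (by simp) x
    simp [pd, show pd b f = fun z => fderiv ℝ f z (Pi.single b 1) from rfl,
      fderiv_clm_apply hd (differentiableAt_const _)]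
  rw [hpd₂, hpd₂]
  refine hf.contDiffAt.isSymmSndFDerivAt ?_ _ _
  rw [minSmoothness_of_isRCLikeNormedField]
  exact WithTop.coe_le_coe.mpr le_top

end PartialDerivatives

lemma lap_pd {m n : ℕ} (P : ChartData m n) (hP : P.SmoothDomain) {F : (Fin m → ℝ) → ℝ}
    (hF : ContDiff ℝ (⊤ : ℕ∞) F) (i : Fin m) (x : Fin m → ℝ) :
    lap P (pd i F) x = pd i (lap P F) x
      + (∑ j, ∑ l, pd i (fun z => P.ginv z j l) x * pd j (pd l F) x)
      - ∑ j, ∑ l, ∑ r, pd i (fun z => P.ginv z j l * P.ΓM z r j l) x * pd r F x := by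
  obtain ⟨hg, hΓ⟩ := hP
  have hpd₃ : ∀ j l, pd j (fun z => pd i (pd l F) z) x = pd i (pd j fun z => pd l F z) x :=
    fun j l => pd_comm (contDiff_pd l hF) j i
  unfold lap
  simp (disch := intros; fun_prop) only [pd_neg, pd_sub, pd_sum, pd_mul, pd_comm hF _ i]
  simp only [hpd₃, Finset.sum_add_distrib]
  ring

section Vnorm

variable {ι : Type} [Fintype ι]

lemma vnorm_nonneg (f : ι → ℝ) : 0 ≤ vnorm f := Real.sqrt_nonneg _

lemma abs_le_vnorm (f : ι → ℝ) (i : ι) : |f i| ≤ vnorm f := by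
  rw [vnorm, ← Real.sqrt_sq_eq_abs]
  exact Real.sqrt_le_sqrt (Finset.single_le_sum (fun j _ => sq_nonneg (f j)) (Finset.mem_univ i))

lemma vnorm_le_sum_abs (f : ι → ℝ) : vnorm f ≤ ∑ i, |f i| := by
  rw [vnorm, Real.sqrt_le_iff]
  refine ⟨Finset.sum_nonneg fun i _ => abs_nonneg _, ?_⟩
  simpa [sq_abs] using Finset.sum_sq_le_sq_sum_of_nonneg (s := Finset.univ)
    (f := fun i => |f i|) fun i _ => abs_nonneg _

end Vnorm

section SmoothAlong

variable {p q : ℕ} {φ : (Fin p → ℝ) → Fin q → ℝ} {F : (Fin q → ℝ) → ℝ}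

lemma contDiff_comp_of_contDiffAt (hφ : ContDiff ℝ (⊤ : ℕ∞) φ)
    (hF : ∀ x, ContDiffAt ℝ (⊤ : ℕ∞) F (φ x)) : ContDiff ℝ (⊤ : ℕ∞) fun x => F (φ x) :=
  contDiff_iff_contDiffAt.2 fun x => (hF x).comp x hφ.contDiffAt

lemma contDiff_pd_comp_of_contDiffAt (hφ : ContDiff ℝ (⊤ : ℕ∞) φ)
    (hF : ∀ x, ContDiffAt ℝ (⊤ : ℕ∞) F (φ x)) (ω : Fin q) :
    ContDiff ℝ (⊤ : ℕ∞) fun x => pd ω F (φ x) :=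
  contDiff_iff_contDiffAt.2 fun x =>
    (((hF x).fderiv_right (m := (⊤ : ℕ∞)) (by simp)).clm_apply contDiffAt_const).comp x
      hφ.contDiffAt

variable {m n : ℕ} {P : ChartData m n} {φ : (Fin m → ℝ) → Fin n → ℝ}

def ChartData.SmoothTargetAlong (P : ChartData m n) (φ : (Fin m → ℝ) → Fin n → ℝ) : Prop :=
  ∀ x α β γ, ContDiffAt ℝ (⊤ : ℕ∞) (fun y => P.ΓN y α β γ) (φ x)

@[fun_prop]
lemma contDiff_dphi (hφ : ContDiff ℝ (⊤ : ℕ∞) φ) (i : Fin m) (β : Fin n) :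
    ContDiff ℝ (⊤ : ℕ∞) fun x => dphi φ x i β := by
  unfold dphi
  fun_prop

lemma contDiff_ΓN_comp (hφ : ContDiff ℝ (⊤ : ℕ∞) φ) (hΓ : P.SmoothTargetAlong φ)
    (α β γ : Fin n) : ContDiff ℝ (⊤ : ℕ∞) fun x => P.ΓN (φ x) α β γ :=
  contDiff_comp_of_contDiffAt hφ fun x => hΓ x α β γ

lemma contDiff_pd_ΓN_comp (hφ : ContDiff ℝ (⊤ : ℕ∞) φ) (hΓ : P.SmoothTargetAlong φ)
    (ω α β γ : Fin n) : ContDiff ℝ (⊤ : ℕ∞) fun x => pd ω (fun y => P.ΓN y α β γ) (φ x) :=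
  contDiff_pd_comp_of_contDiffAt hφ (fun x => hΓ x α β γ) ω

lemma contDiff_uvar (hP : P.SmoothDomain) (hφ : ContDiff ℝ (⊤ : ℕ∞) φ)
    (hΓ : P.SmoothTargetAlong φ) : ∀ j α, ContDiff ℝ (⊤ : ℕ∞) fun x => uvar P φ j x α
  | 0, α => by
    have := contDiff_ΓN_comp hφ hΓ
    obtain ⟨hg, hΓM⟩ := hP
    unfold uvar tension lap
    fun_prop
  | j + 1, α => by
    have ih := contDiff_uvar hP hφ hΓ j
    have := contDiff_ΓN_comp hφ hΓ
    have := contDiff_pd_ΓN_comp hφ hΓ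
    obtain ⟨hg, hΓM⟩ := hP
    unfold uvar Asec Aop Scoef lap
    fun_prop

end SmoothAlong

section BigO

variable {X : Type*} [TopologicalSpace X] {K : Set X} {c F g : X → ℝ}

lemma isBigO_one_of_continuous (hK : IsCompact K) (hc : Continuous c) :
    c =O[𝓟 K] fun _ => (1 : ℝ) :=
  hc.continuousOn.isBigO_principal hK (by norm_num)

lemma _root_.Continuous.mul_isBigO (hK : IsCompact K) (hc : Continuous c)
    (hF : F =O[𝓟 K] g) : (fun x => c x * F x) =O[𝓟 K] g := by
  simpa using (isBigO_one_of_continuous hK hc).mul hF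

lemma _root_.Asymptotics.IsBigO.mul_continuous (hK : IsCompact K) (hF : F =O[𝓟 K] g)
    (hc : Continuous c) : (fun x => F x * c x) =O[𝓟 K] g := by
  simpa using hF.mul (isBigO_one_of_continuous hK hc)

end BigO

lemma exists_pos_abs_le_of_isBigO {X : Type*} {K : Set X} {F g : X → ℝ} (h : F =O[𝓟 K] g)
    (hg : ∀ x, 0 ≤ g x) : ∃ C > 0, ∀ x ∈ K, |F x| ≤ C * g x := by
  obtain ⟨C, hC, hCF⟩ := h.exists_pos
  refine ⟨C, hC, fun x hx => ?_⟩
  simpa [abs_of_nonneg (hg x)] using eventually_principal.1 hCF.bound x hx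

lemma isBigO_self_add {α : Type*} {l : Filter α} {a b : α → ℝ} (ha : ∀ x, 0 ≤ a x)
    (hb : ∀ x, 0 ≤ b x) : a =O[l] fun x => a x + b x :=
  IsBigO.of_norm_le fun x => by
    rw [Real.norm_of_nonneg (ha x)]
    exact le_add_of_nonneg_right (hb x)

lemma isBigO_pd_mul {p : ℕ} {K : Set (Fin p → ℝ)} {a b g : (Fin p → ℝ) → ℝ} (hK : IsCompact K)
    (ha : Differentiable ℝ a) (hb : ContDiff ℝ 1 b) (i : Fin p)
    (ha₀ : a =O[𝓟 K] g) (ha₁ : pd i a =O[𝓟 K] g) :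
    (fun x => pd i (fun z => b z * a z) x) =O[𝓟 K] g := by
  have hdb : Continuous (pd i b) := (hb.continuous_fderiv one_ne_zero).clm_apply continuous_const
  simp only [pd_mul (hb.differentiable one_ne_zero _) (ha _)]
  exact (hdb.mul_isBigO hK ha₀).add (hb.continuous.mul_isBigO hK ha₁)

section LocalFormulas

variable {m n : ℕ} (P : ChartData m n)

lemma lap_sub_const (F : (Fin m → ℝ) → ℝ) (c : ℝ) : lap P (fun z => F z - c) = lap P F := by
  funext x
  simp only [lap, pd_sub_const]

lemma lap_eq_sum_dpair_sub_tension (φ : (Fin m → ℝ) → Fin n → ℝ) (x : Fin m → ℝ) (α : Fin n) :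
    lap P (fun z => φ z α) x
      = ∑ β, ∑ γ, dpair P φ φ x β γ * P.ΓN (φ x) α β γ - tension P φ x α := by
  have hswap : ∀ A : Fin n → Fin n → Fin m → Fin m → ℝ,
      ∑ β, ∑ γ, ∑ i, ∑ j, A β γ i j = ∑ i, ∑ j, ∑ β, ∑ γ, A β γ i j := fun A =>
    calc _ = ∑ β, ∑ i, ∑ j, ∑ γ, A β γ i j := Finset.sum_congr rfl fun β _ => by
          rw [Finset.sum_comm]
          exact Finset.sum_congr rfl fun i _ => Finset.sum_comm
      _ = _ := by
          rw [Finset.sum_comm]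
          exact Finset.sum_congr rfl fun i _ => Finset.sum_comm
  simp only [tension, dpair, Finset.sum_mul, hswap, mul_right_comm _ (P.ΓN _ _ _ _)]
  ring

lemma pd_pd_eq_sff (φ : (Fin m → ℝ) → Fin n → ℝ) (x : Fin m → ℝ) (j l : Fin m) (α : Fin n) :
    pd j (pd l fun z => φ z α) x
      = sff P φ x j l α + ∑ r, P.ΓM x r j l * dphi φ x r α
        - ∑ β, ∑ γ, P.ΓN (φ x) α β γ * dphi φ x j β * dphi φ x l γ := by
  unfold sff dphi
  ring

end LocalFormulas

section Equator

variable {m d : ℕ} {P : ChartData m (d+1)} {φ : (Fin m → ℝ) → Fin (d+1) → ℝ}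
  {K : Set (Fin m → ℝ)}

def equatorDev (φ : (Fin m → ℝ) → Fin (d+1) → ℝ) (x : Fin m → ℝ) : ℝ :=
  φ x (Fin.last d) - Real.pi / 2

def equatorDevC1 (φ : (Fin m → ℝ) → Fin (d+1) → ℝ) (x : Fin m → ℝ) : ℝ :=
  |equatorDev φ x| + vnorm fun i => pd i (equatorDev φ) x

def HasEquatorFactor (Γ : (Fin (d+1) → ℝ) → Fin (d+1) → Fin (d+1) → Fin (d+1) → ℝ) : Prop :=
  ∀ β γ, ∃ h : (Fin (d+1) → ℝ) → ℝ, ContDiff ℝ (⊤ : ℕ∞) h ∧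
    ∀ y, Γ y (Fin.last d) β γ = Real.sin (2 * y (Fin.last d)) * h y

lemma equatorDevC1_nonneg (x : Fin m → ℝ) : 0 ≤ equatorDevC1 φ x :=
  add_nonneg (abs_nonneg _) (vnorm_nonneg _)

lemma pd_equatorDev (i : Fin m) (x : Fin m → ℝ) :
    pd i (equatorDev φ) x = dphi φ x i (Fin.last d) :=
  pd_sub_const i _

lemma isBigO_equatorDev : equatorDev φ =O[𝓟 K] equatorDevC1 φ :=
  IsBigO.of_norm_le fun _ => le_add_of_nonneg_right (vnorm_nonneg _)

lemma isBigO_dphi_last (i : Fin m) :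
    (fun x => dphi φ x i (Fin.last d)) =O[𝓟 K] equatorDevC1 φ :=
  IsBigO.of_norm_le fun x => by
    refine le_add_of_nonneg_of_le (abs_nonneg _) ?_
    simpa [pd_equatorDev] using abs_le_vnorm (fun i => pd i (equatorDev φ) x) i

lemma isBigO_sin_two_mul_mul (hK : IsCompact K) {c : (Fin m → ℝ) → ℝ} (hc : Continuous c) :
    (fun x => Real.sin (2 * φ x (Fin.last d)) * c x) =O[𝓟 K] equatorDev φ := by
  refine (IsBigO.of_bound 2 (Eventually.of_forall fun x => ?_)).mul_continuous hK hc
  have h : 2 * φ x (Fin.last d) = 2 * equatorDev φ x + Real.pi := by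
    unfold equatorDev
    ring
  rw [Real.norm_eq_abs, Real.norm_eq_abs, h, Real.sin_add_pi, abs_neg]
  exact Real.abs_sin_le_abs.trans (by rw [abs_mul, abs_two])

lemma pd_sin_two_mul_last {ω : Fin (d+1)} (hω : ω ≠ Fin.last d) (y : Fin (d+1) → ℝ) :
    pd ω (fun y => Real.sin (2 * y (Fin.last d))) y = 0 := by
  rw [pd_sin (by fun_prop), pd_const_mul (by fun_prop), pd_apply, Pi.single_eq_of_ne hω.symm,
    mul_zero, mul_zero]

lemma isBigO_ΓN_last (hK : IsCompact K) (hlast : HasEquatorFactor P.ΓN) (hφ : Continuous φ)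
    (β γ : Fin (d+1)) : (fun x => P.ΓN (φ x) (Fin.last d) β γ) =O[𝓟 K] equatorDev φ := by
  obtain ⟨h, hh, hΓ⟩ := hlast β γ
  simp only [hΓ]
  exact isBigO_sin_two_mul_mul hK (hh.continuous.comp hφ)

lemma isBigO_pd_ΓN_last (hK : IsCompact K) (hlast : HasEquatorFactor P.ΓN) (hφ : Continuous φ)
    {ω : Fin (d+1)} (hω : ω ≠ Fin.last d) (β γ : Fin (d+1)) :
    (fun x => pd ω (fun y => P.ΓN y (Fin.last d) β γ) (φ x)) =O[𝓟 K] equatorDev φ := by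
  obtain ⟨h, hh, hΓ⟩ := hlast β γ
  have hpd : ∀ y, pd ω (fun y => P.ΓN y (Fin.last d) β γ) y
      = Real.sin (2 * y (Fin.last d)) * pd ω h y := fun y => by
    simp only [hΓ]
    rw [pd_mul (by fun_prop) (by fun_prop), pd_sin_two_mul_last hω, zero_mul, zero_add]
  simp only [hpd]
  exact isBigO_sin_two_mul_mul hK ((contDiff_pd ω hh).continuous.comp hφ)

lemma isBigO_pd_ΓN_last_comp (hK : IsCompact K) (hlast : HasEquatorFactor P.ΓN)
    (hφ : ContDiff ℝ (⊤ : ℕ∞) φ) (i : Fin m) (β γ : Fin (d+1)) :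
    (fun x => pd i (fun z => P.ΓN (φ z) (Fin.last d) β γ) x) =O[𝓟 K] equatorDevC1 φ := by
  obtain ⟨h, hh, hΓ⟩ := hlast β γ
  have hpd : ∀ x, pd i (fun z => P.ΓN (φ z) (Fin.last d) β γ) x
      = 2 * Real.cos (2 * φ x (Fin.last d)) * h (φ x) * dphi φ x i (Fin.last d)
        + Real.sin (2 * φ x (Fin.last d)) * pd i (fun z => h (φ z)) x := fun x => by
    simp only [hΓ]
    rw [pd_mul (by fun_prop) (by fun_prop), pd_sin (by fun_prop), pd_const_mul (by fun_prop)]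
    unfold dphi
    ring
  simp only [hpd]
  exact (Continuous.mul_isBigO hK (by fun_prop) (isBigO_dphi_last i)).add
    ((isBigO_sin_two_mul_mul hK (by fun_prop)).trans isBigO_equatorDev)

lemma isBigO_Scoef_last (hK : IsCompact K) (hlast : HasEquatorFactor P.ΓN)
    (hφ : ContDiff ℝ (⊤ : ℕ∞) φ) (hΓ : P.SmoothTargetAlong φ)
    {β ω : Fin (d+1)} (hβ : β ≠ Fin.last d) (hω : ω ≠ Fin.last d) (ϑ : Fin (d+1)) :
    (fun x => Scoef P (φ x) (Fin.last d) β ω ϑ) =O[𝓟 K] equatorDev φ := by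
  have hΓφ := contDiff_ΓN_comp hφ hΓ
  have hΓL := isBigO_ΓN_last hK hlast hφ.continuous
  unfold Scoef
  simp only [div_eq_inv_mul]
  refine IsBigO.const_mul_left (((?_ : IsBigO _ _ _).add ?_).add ?_ |>.add ?_) _
  · exact isBigO_pd_ΓN_last hK hlast hφ.continuous hω β ϑ
  · exact IsBigO.fun_sum fun γ _ => (hΓφ γ β ϑ).continuous.mul_isBigO hK (hΓL ω γ)
  · exact isBigO_pd_ΓN_last hK hlast hφ.continuous hβ ω ϑ
  · exact IsBigO.fun_sum fun γ _ => (hΓφ γ ω ϑ).continuous.mul_isBigO hK (hΓL β γ)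

lemma isBigO_ginv_dphi_dphi_Scoef_last (hK : IsCompact K) (hlast : HasEquatorFactor P.ΓN)
    (hP : P.SmoothDomain) (hφ : ContDiff ℝ (⊤ : ℕ∞) φ) (hΓ : P.SmoothTargetAlong φ)
    (i j : Fin m) (β ω ϑ : Fin (d+1)) :
    (fun x => P.ginv x i j * dphi φ x j β * dphi φ x i ω * Scoef P (φ x) (Fin.last d) β ω ϑ)
      =O[𝓟 K] equatorDevC1 φ := by
  obtain ⟨hg, -⟩ := hP
  have := contDiff_ΓN_comp hφ hΓ
  have := contDiff_pd_ΓN_comp hφ hΓ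
  have hS : Continuous fun x => Scoef P (φ x) (Fin.last d) β ω ϑ := by
    unfold Scoef
    fun_prop
  by_cases hβ : β = Fin.last d
  · subst hβ
    exact ((Continuous.mul_isBigO hK (by fun_prop) (isBigO_dphi_last j)).mul_continuous hK
      (by fun_prop)).mul_continuous hK hS
  by_cases hω : ω = Fin.last d
  · subst hω
    exact (Continuous.mul_isBigO hK (by fun_prop) (isBigO_dphi_last i)).mul_continuous hK hS
  exact Continuous.mul_isBigO hK (by fun_prop)
    ((isBigO_Scoef_last hK hlast hφ hΓ hβ hω ϑ).trans isBigO_equatorDev)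

end Equator

section Sphere

variable {d : ℕ} {gt : (Fin d → ℝ) → Fin d → Fin d → ℝ}
  {Γt : (Fin d → ℝ) → Fin d → Fin d → Fin d → ℝ}

lemma contDiffAt_sphereΓ (hgt : ∀ a b, ContDiff ℝ (⊤ : ℕ∞) fun y => gt y a b)
    (hΓt : ∀ a b c, ContDiff ℝ (⊤ : ℕ∞) fun y => Γt y a b c) {y : Fin (d+1) → ℝ}
    (hy : Real.sin (y (Fin.last d)) ≠ 0) (α β γ : Fin (d+1)) :
    ContDiffAt ℝ (⊤ : ℕ∞) (fun y => sphereΓ d gt Γt y α β γ) y := by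
  unfold sphereΓ
  split_ifs <;> fun_prop (disch := assumption)

lemma hasEquatorFactor_sphereΓ (hgt : ∀ a b, ContDiff ℝ (⊤ : ℕ∞) fun y => gt y a b)
    (Γt : (Fin d → ℝ) → Fin d → Fin d → Fin d → ℝ) : HasEquatorFactor (sphereΓ d gt Γt) := by
  intro β γ
  by_cases hβ : (β : ℕ) < d
  · by_cases hγ : (γ : ℕ) < d
    · refine ⟨fun y => -(1/2) * gt (fun a => y a.castSucc) ⟨β, hβ⟩ ⟨γ, hγ⟩, by fun_prop,
        fun y => ?_⟩
      simp only [sphereΓ, hβ, hγ, dite_true, Fin.val_last, lt_self_iff_false, dite_false]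
      ring
    · exact ⟨0, contDiff_const, fun y => by simp [sphereΓ, hβ, hγ]⟩
  · exact ⟨0, contDiff_const, fun y => by simp [sphereΓ, hβ]⟩

end Sphere

section Estimates

variable {m d : ℕ} {P : ChartData m (d+1)} {φ : (Fin m → ℝ) → Fin (d+1) → ℝ}
  {K : Set (Fin m → ℝ)}

lemma isBigO_lap_equatorDev (hK : IsCompact K) (hlast : HasEquatorFactor P.ΓN)
    (hP : P.SmoothDomain) (hφ : ContDiff ℝ (⊤ : ℕ∞) φ) :
    lap P (equatorDev φ) =O[𝓟 K] fun x => |equatorDev φ x| + |uvar P φ 0 x (Fin.last d)| := by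
  obtain ⟨hg, -⟩ := hP
  have hlap : lap P (equatorDev φ) = fun x => ∑ β, ∑ γ,
      dpair P φ φ x β γ * P.ΓN (φ x) (Fin.last d) β γ - uvar P φ 0 x (Fin.last d) := by
    funext x
    unfold equatorDev
    rw [lap_sub_const, lap_eq_sum_dpair_sub_tension, uvar]
  rw [hlap]
  refine IsBigO.sub ?_ (IsBigO.of_norm_le fun x => le_add_of_nonneg_left (abs_nonneg _))
  refine IsBigO.trans (g := equatorDev φ) ?_
    (IsBigO.of_norm_le fun x => le_add_of_nonneg_right (abs_nonneg _))
  exact IsBigO.fun_sum fun β _ => IsBigO.fun_sum fun γ _ => Continuous.mul_isBigO hK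
    (by unfold dpair; fun_prop) (isBigO_ΓN_last hK hlast hφ.continuous β γ)

lemma isBigO_pd_pd_last (hK : IsCompact K) (hlast : HasEquatorFactor P.ΓN)
    (hP : P.SmoothDomain) (hφ : ContDiff ℝ (⊤ : ℕ∞) φ) (j l : Fin m) :
    (fun x => pd j (pd l fun z => φ z (Fin.last d)) x) =O[𝓟 K] fun x => equatorDevC1 φ x
      + vnorm fun p : Fin m × Fin m × Fin (d+1) => sff P φ x p.1 p.2.1 p.2.2 := by
  obtain ⟨-, hΓM⟩ := hP
  have hC1 := isBigO_self_add (l := 𝓟 K) (equatorDevC1_nonneg (φ := φ))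
    fun x => vnorm_nonneg fun p : Fin m × Fin m × Fin (d+1) => sff P φ x p.1 p.2.1 p.2.2
  simp only [pd_pd_eq_sff P φ]
  refine (IsBigO.add ?_ ?_).sub ?_
  · exact IsBigO.of_norm_le fun x => (abs_le_vnorm (fun p : Fin m × Fin m × Fin (d+1) =>
      sff P φ x p.1 p.2.1 p.2.2) (j, l, Fin.last d)).trans
        (le_add_of_nonneg_left (equatorDevC1_nonneg x))
  · exact (IsBigO.fun_sum fun r _ =>
      Continuous.mul_isBigO hK (by fun_prop) (isBigO_dphi_last r)).trans hC1
  · refine (IsBigO.fun_sum fun β _ => IsBigO.fun_sum fun γ _ => ?_).trans hC1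
    exact (((isBigO_ΓN_last hK hlast hφ.continuous β γ).trans isBigO_equatorDev).mul_continuous
      hK (by fun_prop)).mul_continuous hK (by fun_prop)

lemma isBigO_pd_lap_last (hK : IsCompact K) (hlast : HasEquatorFactor P.ΓN)
    (hP : P.SmoothDomain) (hφ : ContDiff ℝ (⊤ : ℕ∞) φ) (hΓ : P.SmoothTargetAlong φ)
    (i : Fin m) :
    (fun x => pd i (lap P fun z => φ z (Fin.last d)) x)
      =O[𝓟 K] fun x => equatorDevC1 φ x + |vvar P φ 0 x i (Fin.last d)| := by
  have hu := contDiff_uvar hP hφ hΓ 0 (Fin.last d)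
  obtain ⟨hg, -⟩ := hP
  have hΓφ := contDiff_ΓN_comp hφ hΓ
  have hdpair : ∀ β γ, ContDiff ℝ (⊤ : ℕ∞) fun x => dpair P φ φ x β γ := by
    unfold dpair
    fun_prop
  have hlap : lap P (fun z => φ z (Fin.last d)) = fun x => (∑ β, ∑ γ,
      dpair P φ φ x β γ * P.ΓN (φ x) (Fin.last d) β γ) - uvar P φ 0 x (Fin.last d) :=
    funext fun x => lap_eq_sum_dpair_sub_tension P φ x (Fin.last d)
  rw [hlap]
  simp (disch := intros; fun_prop) only [pd_sub, pd_sum]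
  refine IsBigO.sub ?_ (IsBigO.of_norm_le fun x => le_add_of_nonneg_left (equatorDevC1_nonneg x))
  refine (IsBigO.fun_sum fun β _ => IsBigO.fun_sum fun γ _ => ?_).trans
    (isBigO_self_add equatorDevC1_nonneg fun x => abs_nonneg _)
  exact isBigO_pd_mul hK ((hΓφ _ β γ).differentiable (by simp)) ((hdpair β γ).of_le (by simp)) i
    ((isBigO_ΓN_last hK hlast hφ.continuous β γ).trans isBigO_equatorDev)
    (isBigO_pd_ΓN_last_comp hK hlast hφ i β γ)

lemma isBigO_lap_pd_equatorDev (hK : IsCompact K) (hlast : HasEquatorFactor P.ΓN)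
    (hP : P.SmoothDomain) (hφ : ContDiff ℝ (⊤ : ℕ∞) φ) (hΓ : P.SmoothTargetAlong φ)
    (i : Fin m) :
    (fun x => lap P (pd i (equatorDev φ)) x) =O[𝓟 K] fun x => equatorDevC1 φ x
      + vnorm (fun p : Fin m × Fin m × Fin (d+1) => sff P φ x p.1 p.2.1 p.2.2)
      + vnorm (fun i => vvar P φ 0 x i (Fin.last d)) := by
  have hpdpd := isBigO_pd_pd_last hK hlast hP hφ
  have hpdlap := isBigO_pd_lap_last hK hlast hP hφ hΓ i
  have hlap := lap_pd P hP (by fun_prop : ContDiff ℝ (⊤ : ℕ∞) fun z => φ z (Fin.last d)) i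
  obtain ⟨hg, hΓM⟩ := hP
  have hsff x := vnorm_nonneg fun p : Fin m × Fin m × Fin (d+1) => sff P φ x p.1 p.2.1 p.2.2
  have hvvar x := vnorm_nonneg fun i => vvar P φ 0 x i (Fin.last d)
  have hsffE := isBigO_self_add (l := 𝓟 K)
    (fun x => add_nonneg (equatorDevC1_nonneg (φ := φ) x) (hsff x)) hvvar
  rw [show pd i (equatorDev φ) = pd i fun z => φ z (Fin.last d) from
    funext fun x => pd_sub_const i _]
  simp only [hlap]
  refine (IsBigO.add ?_ ?_).sub ?_
  · refine hpdlap.trans (IsBigO.of_norm_le fun x => ?_)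
    rw [Real.norm_of_nonneg (add_nonneg (equatorDevC1_nonneg x) (abs_nonneg _))]
    have := abs_le_vnorm (fun i => vvar P φ 0 x i (Fin.last d)) i
    linarith [hsff x]
  · exact IsBigO.fun_sum fun j _ => IsBigO.fun_sum fun l _ =>
      Continuous.mul_isBigO hK (by fun_prop) ((hpdpd j l).trans hsffE)
  · exact IsBigO.fun_sum fun j _ => IsBigO.fun_sum fun l _ => IsBigO.fun_sum fun r _ =>
      Continuous.mul_isBigO hK (by fun_prop)
        (((isBigO_dphi_last r).trans (isBigO_self_add equatorDevC1_nonneg hsff)).trans hsffE)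

lemma isBigO_vnorm_lap_pd_equatorDev (hK : IsCompact K) (hlast : HasEquatorFactor P.ΓN)
    (hP : P.SmoothDomain) (hφ : ContDiff ℝ (⊤ : ℕ∞) φ) (hΓ : P.SmoothTargetAlong φ) :
    (fun x => vnorm fun i => lap P (pd i (equatorDev φ)) x) =O[𝓟 K] fun x => equatorDevC1 φ x
      + vnorm (fun p : Fin m × Fin m × Fin (d+1) => sff P φ x p.1 p.2.1 p.2.2)
      + vnorm (fun i => vvar P φ 0 x i (Fin.last d)) :=
  (IsBigO.of_norm_le (g := fun x => ∑ i, |lap P (pd i (equatorDev φ)) x|) fun x => by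
    rw [Real.norm_of_nonneg (vnorm_nonneg _)]
    exact vnorm_le_sum_abs _).trans
  (IsBigO.fun_sum fun i _ => (isBigO_lap_pd_equatorDev hK hlast hP hφ hΓ i).abs_left)

lemma isBigO_Asec_last (hK : IsCompact K) (hlast : HasEquatorFactor P.ΓN)
    (hP : P.SmoothDomain) (hφ : ContDiff ℝ (⊤ : ℕ∞) φ) (hΓ : P.SmoothTargetAlong φ)
    {σ : (Fin m → ℝ) → Fin (d+1) → ℝ} (hσ : ∀ α, ContDiff ℝ (⊤ : ℕ∞) fun x => σ x α) :
    (fun x => Asec P φ σ x (Fin.last d)) =O[𝓟 K] equatorDevC1 φ := by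
  have hSΓ := isBigO_ginv_dphi_dphi_Scoef_last hK hlast hP hφ hΓ
  obtain ⟨hg, hΓM⟩ := hP
  have := contDiff_ΓN_comp hφ hΓ
  have hΓL β ϑ := (isBigO_ΓN_last hK hlast hφ.continuous β ϑ).trans (isBigO_equatorDev (K := K))
  unfold Asec Aop
  refine (IsBigO.fun_sum fun ϑ _ => IsBigO.fun_sum fun i _ => ?_).add
    (IsBigO.fun_sum fun ϑ _ => Continuous.mul_isBigO hK (by fun_prop) (IsBigO.sub ?_ ?_))
  · refine Continuous.mul_isBigO hK (by fun_prop) (IsBigO.const_mul_left ?_ _)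
    exact IsBigO.fun_sum fun j _ => IsBigO.fun_sum fun β _ =>
      Continuous.mul_isBigO hK (by fun_prop) (hΓL β ϑ)
  · exact IsBigO.fun_sum fun β _ =>
      Continuous.mul_isBigO hK (by unfold lap; fun_prop) (hΓL β ϑ)
  · exact IsBigO.fun_sum fun i _ => IsBigO.fun_sum fun j _ => IsBigO.fun_sum fun β _ =>
      IsBigO.fun_sum fun ω _ => hSΓ i j β ω ϑ

end Estimates

theorem sphere_estimates_A_general
    {m d : ℕ} (P : ChartData m (d+1))
    (gt : (Fin d → ℝ) → Fin d → Fin d → ℝ)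
    (Γt : (Fin d → ℝ) → Fin d → Fin d → Fin d → ℝ)
    (hΓN : P.ΓN = sphereΓ d gt Γt)
    (hPdom : P.SmoothDomain)
    (hgt : ∀ a b, ContDiff ℝ (⊤ : ℕ∞) fun y => gt y a b)
    (hΓt : ∀ a b c, ContDiff ℝ (⊤ : ℕ∞) fun y => Γt y a b c)
    (φ : (Fin m → ℝ) → Fin (d+1) → ℝ) (hφ : ContDiff ℝ (⊤ : ℕ∞) φ)
    (hchart : ∀ x, 0 < φ x (Fin.last d) ∧ φ x (Fin.last d) < Real.pi)
    (k : ℕ)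
    (D : Set (Fin m → ℝ)) (hDcpt : IsCompact (closure D)) :
    ∃ C > 0, ∀ x ∈ D,
      (|lap P (fun z => φ z (Fin.last d) - Real.pi / 2) x|
          ≤ C * (|φ x (Fin.last d) - Real.pi / 2| + |uvar P φ 0 x (Fin.last d)|))
      ∧ (vnorm (fun i : Fin m =>
            lap P (fun z => pd i (fun w => φ w (Fin.last d) - Real.pi / 2) z) x)
          ≤ C * (|φ x (Fin.last d) - Real.pi / 2|
            + vnorm (fun i : Fin m => pd i (fun w => φ w (Fin.last d) - Real.pi / 2) x)
            + vnorm (fun p : Fin m × Fin m × Fin (d+1) => sff P φ x p.1 p.2.1 p.2.2)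
            + vnorm (fun i : Fin m => vvar P φ 0 x i (Fin.last d))))
      ∧ ∀ j ≤ k - 3,
          |Asec P φ (uvar P φ j) x (Fin.last d)|
            ≤ C * (|φ x (Fin.last d) - Real.pi / 2|
              + vnorm (fun i : Fin m => pd i (fun w => φ w (Fin.last d) - Real.pi / 2) x)) := by
  have hlast : HasEquatorFactor P.ΓN := hΓN ▸ hasEquatorFactor_sphereΓ hgt Γt
  have hΓ : P.SmoothTargetAlong φ := fun x => hΓN ▸
    contDiffAt_sphereΓ hgt hΓt (Real.sin_pos_of_pos_of_lt_pi (hchart x).1 (hchart x).2).ne'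
  obtain ⟨C₁, hC₁, h₁⟩ := exists_pos_abs_le_of_isBigO
    (isBigO_lap_equatorDev hDcpt hlast hPdom hφ) fun x => by positivity
  obtain ⟨C₂, hC₂, h₂⟩ := exists_pos_abs_le_of_isBigO
    (isBigO_vnorm_lap_pd_equatorDev hDcpt hlast hPdom hφ hΓ) fun x =>
      add_nonneg (add_nonneg (equatorDevC1_nonneg x) (vnorm_nonneg _)) (vnorm_nonneg _)
  obtain ⟨C₃, hC₃, h₃⟩ := exists_pos_abs_le_of_isBigO
    (IsBigO.fun_sum (s := Finset.range (k - 3 + 1)) fun j _ =>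
      (isBigO_Asec_last hDcpt hlast hPdom hφ hΓ (contDiff_uvar hPdom hφ hΓ j)).abs_left)
    equatorDevC1_nonneg
  refine ⟨max C₁ (max C₂ C₃), by positivity, fun x hx => ⟨?_, ?_, fun j hj => ?_⟩⟩
  · exact (h₁ x (subset_closure hx)).trans
      (mul_le_mul_of_nonneg_right (le_max_left _ _) (by positivity))
  · exact (le_abs_self _).trans ((h₂ x (subset_closure hx)).trans
      (mul_le_mul_of_nonneg_right ((le_max_left C₂ C₃).trans (le_max_right _ _))
        (add_nonneg (add_nonneg (equatorDevC1_nonneg x) (vnorm_nonneg _)) (vnorm_nonneg _))))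
  · calc |Asec P φ (uvar P φ j) x (Fin.last d)|
        ≤ ∑ j ∈ Finset.range (k - 3 + 1), |Asec P φ (uvar P φ j) x (Fin.last d)| :=
          Finset.single_le_sum (f := fun j => |Asec P φ (uvar P φ j) x (Fin.last d)|)
            (fun _ _ => abs_nonneg _) (Finset.mem_range.2 (by omega))
      _ ≤ C₃ * equatorDevC1 φ x := (le_abs_self _).trans (h₃ x (subset_closure hx))
      _ ≤ _ := mul_le_mul_of_nonneg_right ((le_max_right C₂ C₃).trans (le_max_right _ _))
          (equatorDevC1_nonneg x)

/-- (Lemma 2.9 of the paper.)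
Let `φ : M → S^n` (`n = d+1`) be a smooth map expressed in the equator coordinates
of the sphere, and set `f := φ^n - π/2`. Then on any open set `D` with compact
closure contained in the chart domain `U` there exists `C > 0` such that, for
`0 ≤ j ≤ k-3`:
(i) `|Δf| ≤ C(|f| + |u₀^n|)`;
(ii) `|Δ(df)| ≤ C(|f| + |df| + |∇df| + |v₀^n|)`;
(iii) `|A^n_{j+1}| ≤ C(|f| + |df|)`. -/
theorem sphere_estimates_A
    {m d : ℕ} (P : ChartData m (d+1))
    (gt : (Fin d → ℝ) → Fin d → Fin d → ℝ)
    (Γt : (Fin d → ℝ) → Fin d → Fin d → Fin d → ℝ)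
    (hΓN : P.ΓN = sphereΓ d gt Γt)
    (hPdom : P.SmoothDomain) (hPriem : P.Riemannian)
    (hgt : ∀ a b, ContDiff ℝ (⊤ : ℕ∞) fun y => gt y a b)
    (hΓt : ∀ a b c, ContDiff ℝ (⊤ : ℕ∞) fun y => Γt y a b c)
    (hLC : LeviCivita d gt Γt)
    (U : Set (Fin m → ℝ)) (hUopen : IsOpen U)
    (φ : (Fin m → ℝ) → Fin (d+1) → ℝ) (hφ : ContDiff ℝ (⊤ : ℕ∞) φ)
    (hchart : ∀ x, 0 < φ x (Fin.last d) ∧ φ x (Fin.last d) < Real.pi)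
    (k : ℕ) (hk : 3 ≤ k)
    (D : Set (Fin m → ℝ)) (hDopen : IsOpen D) (hDcpt : IsCompact (closure D))
    (hDsub : closure D ⊆ U) :
    ∃ C > 0, ∀ x ∈ D,
      (|lap P (fun z => φ z (Fin.last d) - Real.pi / 2) x|
          ≤ C * (|φ x (Fin.last d) - Real.pi / 2| + |uvar P φ 0 x (Fin.last d)|))
      ∧ (vnorm (fun i : Fin m =>
            lap P (fun z => pd i (fun w => φ w (Fin.last d) - Real.pi / 2) z) x)
          ≤ C * (|φ x (Fin.last d) - Real.pi / 2|
            + vnorm (fun i : Fin m => pd i (fun w => φ w (Fin.last d) - Real.pi / 2) x)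
            + vnorm (fun p : Fin m × Fin m × Fin (d+1) => sff P φ x p.1 p.2.1 p.2.2)
            + vnorm (fun i : Fin m => vvar P φ 0 x i (Fin.last d))))
      ∧ ∀ j ≤ k - 3,
          |Asec P φ (uvar P φ j) x (Fin.last d)|
            ≤ C * (|φ x (Fin.last d) - Real.pi / 2|
              + vnorm (fun i : Fin m => pd i (fun w => φ w (Fin.last d) - Real.pi / 2) x)) :=
  sphere_estimates_A_general P gt Γt hΓN hPdom hgt hΓt φ hφ hchart k D hDcpt

end Polyharm
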